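/- In the de Bruijn graph of span n, a minimal walk starting at the maximal vertex m (at each step taking the unvisited outgoing arc of minimal label) is an Eulerian circuit if and only if the subgraph T — consisting of the maximal-label outgoing arc of each vertex v ≠ m — is a spanning tree converging to m (contains no cycle). -/

import Mathlib

/-- One step in the de Bruijn graph of span `n`: from vertex `u` follow the arc with
label `b`, arriving at `u.tail ++ [b]`. -/
def dbStep {A : Type*} (u : List A) (b : A) : List A := u.tail ++ [b]

/-- The vertex reached after the first `i` steps of the walk with label `s` starting
at vertex `m`. -/
def dbVtx {A : Type*} (m s : List A) (i : ℕ) : List A := (s.take i).foldl dbStep m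

/-!
Write `T` for the arcs of maximal label. Every vertex of an Eulerian digraph has as many
arcs in as out, so a trail that stops only when stuck ends where it started; on such a
closed trail each vertex is entered as often as it is left, hence a vertex all of whose
out-arcs are used also has all of its in-arcs used. A minimal walk leaves a vertex
`u ≠ m` along its `T`-arc only after every other arc at `u` has been used.

If `T` converges to `m`, these two facts propagate "all out-arcs used" from `m` backwards
along `T` to every vertex, so the walk is Eulerian. Conversely, if the walk is Eulerian,
the last departure from a vertex `u ≠ m` is along its `T`-arc, so following `T` from `u`
visits vertices at strictly later last departure times and must reach `m`.
-/

section

open Finset Function Set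

variable {α β : Type*}

theorem card_visits_add_ite (w : ℕ → α) [DecidableEq α] (v : α) (N : ℕ) :
    #{i : Fin N | w i = v} + (if w N = v then 1 else 0) =
      #{i : Fin N | w (i + 1) = v} + (if w 0 = v then 1 else 0) := by
  simp only [card_filter, Fin.sum_univ_eq_sum_range (fun i => if w i = v then 1 else 0),
    Fin.sum_univ_eq_sum_range (fun i => if w (i + 1) = v then 1 else 0)]
  rw [← sum_range_succ, sum_range_succ']

section Walk

/-! Arcs of a labelled digraph are pairs `(u, b)` of a source and a label; the target of
`(u, b)` is `δ u b`. -/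

variable (δ : α → β → α) (m : α) (s : List β)

def walkVtx (i : ℕ) : α := (s.take i).foldl δ m

def walkArc (i : Fin s.length) : α × β := (walkVtx δ m s i, s.get i)

theorem walkVtx_length : walkVtx δ m s s.length = s.foldl δ m := by
  simp [walkVtx]

theorem walkVtx_succ (i : Fin s.length) :
    walkVtx δ m s (i + 1) = δ (walkVtx δ m s i) (s.get i) := by
  rw [walkVtx, walkVtx, List.take_add_one, List.foldl_append]
  simp

theorem mem_range_walkArc_iff {u : α} {b : β} :
    (u, b) ∈ range (walkArc δ m s) ↔
      ∃ (i : ℕ) (hi : i < s.length), walkVtx δ m s i = u ∧ s.get ⟨i, hi⟩ = b := by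
  simp [walkArc, Prod.ext_iff, Fin.exists_iff]

def outArcs (E : Set (α × β)) (v : α) : Set (α × β) := {p ∈ E | p.1 = v}

def inArcs (E : Set (α × β)) (v : α) : Set (α × β) := {p ∈ E | δ p.1 p.2 = v}

def maxArcStep (E : Set (α × β)) (γ : α → β) (x y : α) : Prop :=
  x ≠ m ∧ (x, γ x) ∈ E ∧ y = δ x (γ x)

def IsMinimalWalk [LinearOrder β] (E : Set (α × β)) : Prop :=
  ∀ (i : Fin s.length) (b : β), (walkVtx δ m s i, b) ∈ E →
    (∀ j < i, walkArc δ m s j ≠ (walkVtx δ m s i, b)) → s.get i ≤ b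

section Counting

variable [DecidableEq α]

def exitTimes (v : α) : Finset (Fin s.length) := {i | walkVtx δ m s i = v}

def entryTimes (v : α) : Finset (Fin s.length) := {i | walkVtx δ m s (i + 1) = v}

variable {δ m s} {E : Set (α × β)}

theorem card_exitTimes_add_ite (v : α) :
    #(exitTimes δ m s v) + (if walkVtx δ m s s.length = v then 1 else 0) =
      #(entryTimes δ m s v) + (if m = v then 1 else 0) :=
  card_visits_add_ite (walkVtx δ m s) v s.length

theorem card_entryTimes_le (hE : E.Finite) (harc : ∀ i, walkArc δ m s i ∈ E)
    (hinj : Injective (walkArc δ m s)) (v : α) :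
    #(entryTimes δ m s v) ≤ (inArcs δ E v).ncard := by
  rw [← Set.ncard_coe_finset]
  refine Set.ncard_le_ncard_of_injOn _ (fun i hi => ⟨harc i, ?_⟩) hinj.injOn
    (hE.subset (Set.sep_subset _ _))
  simpa [entryTimes, walkArc, walkVtx_succ] using hi

theorem ncard_outArcs_le_card_exitTimes (hinj : Injective (walkArc δ m s)) {v : α}
    (hv : outArcs E v ⊆ range (walkArc δ m s)) :
    (outArcs E v).ncard ≤ #(exitTimes δ m s v) := by
  calc (outArcs E v).ncard ≤ (walkArc δ m s '' ↑(exitTimes δ m s v)).ncard := by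
        refine Set.ncard_le_ncard ?_ (Set.toFinite _)
        rintro p hp
        obtain ⟨i, rfl⟩ := hv hp
        exact ⟨i, by simpa [exitTimes, walkArc] using hp.2, rfl⟩
    _ = #(exitTimes δ m s v) := by rw [Set.ncard_image_of_injective _ hinj, Set.ncard_coe_finset]

theorem inArcs_subset_range_of_ncard_le (hE : E.Finite) (harc : ∀ i, walkArc δ m s i ∈ E)
    (hinj : Injective (walkArc δ m s)) {v : α}
    (hv : (inArcs δ E v).ncard ≤ #(entryTimes δ m s v)) :
    inArcs δ E v ⊆ range (walkArc δ m s) := by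
  have himage : walkArc δ m s '' ↑(entryTimes δ m s v) ⊆ inArcs δ E v := by
    rintro _ ⟨i, hi, rfl⟩
    exact ⟨harc i, by simpa [entryTimes, walkArc, walkVtx_succ] using hi⟩
  rw [← Set.eq_of_subset_of_ncard_le himage (by
    rwa [Set.ncard_image_of_injective _ hinj, Set.ncard_coe_finset])
    (hE.subset (Set.sep_subset _ _))]
  exact Set.image_subset_range _ _

end Counting

variable {δ m s} {E : Set (α × β)}

theorem walkVtx_length_eq_of_stuck (hE : E.Finite)
    (hbal : ∀ v, (outArcs E v).ncard = (inArcs δ E v).ncard)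
    (harc : ∀ i, walkArc δ m s i ∈ E) (hinj : Injective (walkArc δ m s))
    (hstuck : outArcs E (walkVtx δ m s s.length) ⊆ range (walkArc δ m s)) :
    walkVtx δ m s s.length = m := by
  classical
  by_contra hne
  have hcount := card_exitTimes_add_ite (δ := δ) (m := m) (s := s) (walkVtx δ m s s.length)
  rw [if_pos rfl, if_neg (Ne.symm hne)] at hcount
  have := card_entryTimes_le hE harc hinj (walkVtx δ m s s.length)
  have := ncard_outArcs_le_card_exitTimes hinj hstuck
  have := hbal (walkVtx δ m s s.length)
  omega

theorem inArcs_subset_range_of_outArcs_subset (hE : E.Finite)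
    (hbal : ∀ v, (outArcs E v).ncard = (inArcs δ E v).ncard)
    (harc : ∀ i, walkArc δ m s i ∈ E) (hinj : Injective (walkArc δ m s))
    (hclosed : walkVtx δ m s s.length = m) {v : α}
    (hv : outArcs E v ⊆ range (walkArc δ m s)) :
    inArcs δ E v ⊆ range (walkArc δ m s) := by
  classical
  have hcount := card_exitTimes_add_ite (δ := δ) (m := m) (s := s) v
  rw [hclosed, Nat.add_right_cancel_iff] at hcount
  refine inArcs_subset_range_of_ncard_le hE harc hinj ?_
  rw [← hbal, ← hcount]
  exact ncard_outArcs_le_card_exitTimes hinj hv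

variable [LinearOrder β] {γ : α → β}

theorem exists_le_walkArc_eq_of_maxArc (hmin : IsMinimalWalk δ m s E)
    {u : α} {c : β} (hc : c ∈ upperBounds {b | (u, b) ∈ E}) {k : Fin s.length}
    (hk : walkArc δ m s k = (u, c)) {b : β} (hb : (u, b) ∈ E) :
    ∃ j ≤ k, walkArc δ m s j = (u, b) := by
  by_contra! hunused
  obtain ⟨hvk, hsk⟩ : walkVtx δ m s k = u ∧ s.get k = c := by simpa [walkArc] using hk
  have hcb : c ≤ b := hsk ▸ hmin k b (by rwa [hvk]) fun j hj => by
    simpa [hvk] using hunused j hj.le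
  have hbc : b = c := le_antisymm (hc hb) hcb
  exact hunused k le_rfl (hbc ▸ hk)

theorem outArcs_subset_range_of_maxArc (hmin : IsMinimalWalk δ m s E)
    {u : α} {c : β} (hc : c ∈ upperBounds {b | (u, b) ∈ E}) {k : Fin s.length}
    (hk : walkArc δ m s k = (u, c)) :
    outArcs E u ⊆ range (walkArc δ m s) := by
  rintro ⟨u', b⟩ ⟨hb, rfl : u' = u⟩
  obtain ⟨j, -, hj⟩ := exists_le_walkArc_eq_of_maxArc hmin hc hk hb
  exact ⟨j, hj⟩

variable {V : Set α}

theorem exists_ge_walkArc_eq_maxArc (hall : E ⊆ range (walkArc δ m s))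
    (harc : ∀ i, walkArc δ m s i ∈ E) (hinj : Injective (walkArc δ m s))
    (hmin : IsMinimalWalk δ m s E)
    (hEV : ∀ p ∈ E, p.1 ∈ V) (hγ : ∀ u ∈ V, u ≠ m → IsGreatest {b | (u, b) ∈ E} (γ u))
    (i : Fin s.length) (hi : walkVtx δ m s i ≠ m) :
    ∃ k, i ≤ k ∧ walkArc δ m s k = (walkVtx δ m s i, γ (walkVtx δ m s i)) := by
  have hγi := hγ _ (hEV _ (harc i)) hi
  obtain ⟨k, hk⟩ := hall hγi.1
  obtain ⟨j, hjk, hj⟩ := exists_le_walkArc_eq_of_maxArc hmin hγi.2 hk (harc i)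
  exact ⟨k, hinj hj ▸ hjk, hk⟩

theorem reflTransGen_maxArcStep_walkVtx (hall : E ⊆ range (walkArc δ m s))
    (harc : ∀ i, walkArc δ m s i ∈ E) (hinj : Injective (walkArc δ m s))
    (hmin : IsMinimalWalk δ m s E)
    (hEV : ∀ p ∈ E, p.1 ∈ V) (hγ : ∀ u ∈ V, u ≠ m → IsGreatest {b | (u, b) ∈ E} (γ u))
    (hclosed : walkVtx δ m s s.length = m) (i : ℕ) (hi : i ≤ s.length) :
    Relation.ReflTransGen (maxArcStep δ m E γ) (walkVtx δ m s i) m := by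
  by_cases hm : walkVtx δ m s i = m
  · rw [hm]
  have hlt : i < s.length := lt_of_le_of_ne hi fun h => hm (h ▸ hclosed)
  obtain ⟨k, hik, hk⟩ := exists_ge_walkArc_eq_maxArc hall harc hinj hmin hEV hγ ⟨i, hlt⟩ hm
  have hstep : maxArcStep δ m E γ (walkVtx δ m s i) (walkVtx δ m s (k + 1)) := by
    obtain ⟨hvk, hsk⟩ : walkVtx δ m s k = walkVtx δ m s i ∧ s.get k = γ (walkVtx δ m s i) := by
      simpa [walkArc] using hk
    exact ⟨hm, hk ▸ harc k, by rw [walkVtx_succ, hvk, hsk]⟩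
  have : i < k + 1 := Nat.lt_succ_of_le hik
  exact .head hstep (reflTransGen_maxArcStep_walkVtx hall harc hinj hmin hEV hγ hclosed (k + 1) k.2)
termination_by s.length - i

theorem outArcs_subset_range_of_reflTransGen (hE : E.Finite)
    (hbal : ∀ v, (outArcs E v).ncard = (inArcs δ E v).ncard)
    (harc : ∀ i, walkArc δ m s i ∈ E) (hinj : Injective (walkArc δ m s))
    (hmin : IsMinimalWalk δ m s E)
    (hEV : ∀ p ∈ E, p.1 ∈ V) (hγ : ∀ u ∈ V, u ≠ m → IsGreatest {b | (u, b) ∈ E} (γ u))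
    (hclosed : walkVtx δ m s s.length = m)
    (hstuck : outArcs E (walkVtx δ m s s.length) ⊆ range (walkArc δ m s)) {u : α}
    (hu : Relation.ReflTransGen (maxArcStep δ m E γ) u m) :
    outArcs E u ⊆ range (walkArc δ m s) := by
  induction hu using Relation.ReflTransGen.head_induction_on with
  | refl => rwa [hclosed] at hstuck
  | head hstep _ ih =>
    obtain ⟨hxm, hxE, rfl⟩ := hstep
    obtain ⟨k, hk⟩ := inArcs_subset_range_of_outArcs_subset hE hbal harc hinj hclosed ih
      ⟨hxE, rfl⟩
    exact outArcs_subset_range_of_maxArc hmin (hγ _ (hEV _ hxE) hxm).2 hk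

theorem subset_range_walkArc_and_closed_iff_reflTransGen (hE : E.Finite)
    (hbal : ∀ v, (outArcs E v).ncard = (inArcs δ E v).ncard)
    (harc : ∀ i, walkArc δ m s i ∈ E) (hinj : Injective (walkArc δ m s))
    (hmin : IsMinimalWalk δ m s E)
    (hEV : ∀ p ∈ E, p.1 ∈ V) (hγ : ∀ u ∈ V, u ≠ m → IsGreatest {b | (u, b) ∈ E} (γ u))
    (hstuck : outArcs E (walkVtx δ m s s.length) ⊆ range (walkArc δ m s)) :
    (E ⊆ range (walkArc δ m s) ∧ walkVtx δ m s s.length = m) ↔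
      ∀ u ∈ V, Relation.ReflTransGen (maxArcStep δ m E γ) u m := by
  have hclosed := walkVtx_length_eq_of_stuck hE hbal harc hinj hstuck
  refine ⟨fun ⟨hall, _⟩ u hu => ?_, fun hT => ⟨fun p hp => ?_, hclosed⟩⟩
  · by_cases hum : u = m
    · rw [hum]
    obtain ⟨k, hk⟩ := hall (hγ u hu hum).1
    obtain rfl : walkVtx δ m s k = u := congrArg Prod.fst hk
    exact reflTransGen_maxArcStep_walkVtx hall harc hinj hmin hEV hγ hclosed k k.2.le
  · exact outArcs_subset_range_of_reflTransGen hE hbal harc hinj hmin hEV hγ hclosed hstuck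
      (hT _ (hEV p hp)) ⟨hp, rfl⟩

end Walk

section DeBruijn

variable {A : Type*}

def dbArcs (V : Finset (List A)) (L : Set (List A)) : Set (List A × A) :=
  {p | p.1 ∈ V ∧ p.1 ++ [p.2] ∈ L}

variable {V : Finset (List A)} {L : Set (List A)}

theorem dbArcs_finite [Finite A] : (dbArcs V L).Finite :=
  (V.finite_toSet.prod Set.finite_univ).subset fun _ hp => ⟨hp.1, trivial⟩

theorem ncard_outArcs_dbArcs {u : List A} (hu : u ∈ V) :
    (outArcs (dbArcs V L) u).ncard = {b | u ++ [b] ∈ L}.ncard := by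
  have : outArcs (dbArcs V L) u = Prod.mk u '' {b | u ++ [b] ∈ L} := by
    ext ⟨x, b⟩
    simp only [outArcs, dbArcs, Set.mem_ofPred_eq, Set.mem_image, Prod.mk.injEq]
    constructor
    · rintro ⟨⟨-, hb⟩, rfl⟩
      exact ⟨b, hb, rfl, rfl⟩
    · rintro ⟨b, hb, rfl, rfl⟩
      exact ⟨⟨hu, hb⟩, rfl⟩
  rw [this, Set.ncard_image_of_injective _ (Prod.mk_right_injective u)]

theorem ncard_inArcs_dbArcs {n : ℕ} (hV : ∀ u ∈ V, u.length = n) (hn : 0 < n) {v : List A}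
    (hv : v ∈ V) :
    (inArcs dbStep (dbArcs V L) v).ncard = {a | a :: v.dropLast ∈ V ∧ a :: v ∈ L}.ncard := by
  obtain rfl | ⟨t, c, rfl⟩ := v.eq_nil_or_concat'
  · exact absurd (hV _ hv) (by simp; omega)
  have : inArcs dbStep (dbArcs V L) (t ++ [c]) =
      (fun a => (a :: t, c)) '' {a | a :: (t ++ [c]).dropLast ∈ V ∧ a :: (t ++ [c]) ∈ L} := by
    ext ⟨x, b⟩
    simp only [inArcs, dbArcs, dbStep, Set.mem_ofPred_eq, Set.mem_image, Prod.mk.injEq,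
      List.dropLast_concat]
    constructor
    · rintro ⟨⟨hx, hxb⟩, htb⟩
      obtain ⟨rfl, hbc⟩ := List.append_inj' htb rfl
      obtain rfl := List.singleton_inj.mp hbc
      obtain _ | ⟨a, x⟩ := x
      · exact absurd (hV _ hx) (by simp; omega)
      exact ⟨a, ⟨hx, hxb⟩, rfl, rfl⟩
    · rintro ⟨a, ⟨ha, hab⟩, rfl, rfl⟩
      exact ⟨⟨ha, hab⟩, rfl⟩
  rw [this, Set.ncard_image_of_injective _ fun a a' h => by simpa using h]

theorem ncard_outArcs_eq_ncard_inArcs_dbArcs {n : ℕ} (hV : ∀ u ∈ V, u.length = n) (hn : 0 < n)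
    (harc : ∀ u ∈ V, ∀ b : A, u ++ [b] ∈ L → u.tail ++ [b] ∈ V)
    (hbal : ∀ u ∈ V, {b : A | u ++ [b] ∈ L}.ncard =
      {a : A | (a :: u.dropLast) ∈ V ∧ (a :: u) ∈ L}.ncard) (v : List A) :
    (outArcs (dbArcs V L) v).ncard = (inArcs dbStep (dbArcs V L) v).ncard := by
  by_cases hv : v ∈ V
  · rw [ncard_outArcs_dbArcs hv, ncard_inArcs_dbArcs hV hn hv, hbal v hv]
  have hout : outArcs (dbArcs V L) v = ∅ :=
    Set.eq_empty_of_forall_notMem fun p ⟨hp, hpv⟩ => hv (hpv ▸ hp.1)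
  have hin : inArcs dbStep (dbArcs V L) v = ∅ :=
    Set.eq_empty_of_forall_notMem fun p ⟨hp, hpv⟩ => hv (hpv ▸ harc _ hp.1 _ hp.2)
  rw [hout, hin]

theorem walkArc_mem_dbArcs {m s : List A} (hm : m ∈ V)
    (harc : ∀ u ∈ V, ∀ b : A, u ++ [b] ∈ L → u.tail ++ [b] ∈ V)
    (hwalk : ∀ i : Fin s.length, walkVtx dbStep m s i ++ [s.get i] ∈ L) (i : Fin s.length) :
    walkArc dbStep m s i ∈ dbArcs V L := by
  suffices hV : ∀ i ≤ s.length, walkVtx dbStep m s i ∈ V from ⟨hV i i.2.le, hwalk i⟩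
  intro i hi
  induction i with
  | zero => exact hm
  | succ i ih =>
    rw [walkVtx_succ dbStep m s ⟨i, hi⟩]
    exact harc _ (ih (by omega)) _ (hwalk ⟨i, hi⟩)

end DeBruijn

end

theorem minimal_walk_eulerian_iff_T_tree {A : Type*} [LinearOrder A] [Fintype A]
    (n : ℕ) (hn : 0 < n) (L : Set (List A)) (V : Finset (List A))
    (m : List A) (γ : List A → A) (s : List A)
    -- de Bruijn graph of span n: vertices and arcs
    (hV : ∀ u ∈ V, u.length = n)
    (harc : ∀ u ∈ V, ∀ b : A, u ++ [b] ∈ L → u.tail ++ [b] ∈ V)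
    -- the graph is Eulerian: balanced in/out degrees ...
    (hbal : ∀ u ∈ V, {b : A | u ++ [b] ∈ L}.ncard =
      {a : A | (a :: u.dropLast) ∈ V ∧ (a :: u) ∈ L}.ncard)
    (hm : m ∈ V)
    -- γ u is the maximal label of an arc leaving u, for u ≠ m
    (hγ : ∀ u ∈ V, u ≠ m → u ++ [γ u] ∈ L ∧ ∀ b : A, u ++ [b] ∈ L → b ≤ γ u)
    -- s is the label of a walk starting at m ...
    (hwalk : ∀ i (hi : i < s.length), dbVtx m s i ++ [s.get ⟨i, hi⟩] ∈ L)
    -- ... which never repeats an arc ...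
    (honce : ∀ i j (hi : i < s.length) (hj : j < s.length),
      dbVtx m s i = dbVtx m s j → s.get ⟨i, hi⟩ = s.get ⟨j, hj⟩ → i = j)
    -- ... always takes the unvisited arc of minimal label ...
    (hmin : ∀ i (hi : i < s.length), ∀ b : A, dbVtx m s i ++ [b] ∈ L →
      (∀ j (hj : j < i), ¬(dbVtx m s j = dbVtx m s i ∧ s.get ⟨j, by omega⟩ = b)) →
      s.get ⟨i, hi⟩ ≤ b)
    -- ... and stops only when every outgoing arc of the final vertex has been used
    (hstop : ∀ b : A, dbVtx m s s.length ++ [b] ∈ L →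
      ∃ (j : ℕ) (hj : j < s.length), dbVtx m s j = dbVtx m s s.length ∧ s.get ⟨j, hj⟩ = b) :
    -- the walk is an Eulerian circuit iff T is a spanning tree converging to m
    ((∀ u ∈ V, ∀ b : A, u ++ [b] ∈ L →
        ∃ (i : ℕ) (hi : i < s.length), dbVtx m s i = u ∧ s.get ⟨i, hi⟩ = b) ∧
      s.foldl dbStep m = m)
    ↔ (∀ u ∈ V, Relation.ReflTransGen
        (fun x y => x ∈ V ∧ x ≠ m ∧ x ++ [γ x] ∈ L ∧ y = x.tail ++ [γ x]) u m) := by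
  have hvtx : dbVtx m s = walkVtx dbStep m s := rfl
  rw [hvtx] at hwalk honce hmin hstop ⊢
  have hinj : Function.Injective (walkArc dbStep m s) := fun i j h =>
    Fin.ext (honce i j i.2 j.2 (congrArg Prod.fst h) (congrArg Prod.snd h))
  have hmin' : IsMinimalWalk dbStep m s (dbArcs V L) :=
    fun i b hb hunused => hmin i i.2 b hb.2 fun j hj hji =>
      hunused ⟨j, by omega⟩ hj (Prod.ext hji.1 hji.2)
  have hstuck : outArcs (dbArcs V L) (walkVtx dbStep m s s.length) ⊆
      Set.range (walkArc dbStep m s) := by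
    rintro ⟨u, b⟩ ⟨hb, rfl⟩
    exact (mem_range_walkArc_iff dbStep m s).2 (hstop b hb.2)
  have hγ' : ∀ u ∈ (V : Set (List A)), u ≠ m → IsGreatest {b | (u, b) ∈ dbArcs V L} (γ u) :=
    fun u hu hum => ⟨⟨hu, (hγ u hu hum).1⟩, fun b hb => (hγ u hu hum).2 b hb.2⟩
  have key := subset_range_walkArc_and_closed_iff_reflTransGen dbArcs_finite
    (ncard_outArcs_eq_ncard_inArcs_dbArcs hV hn harc hbal)
    (walkArc_mem_dbArcs hm harc fun i => hwalk i i.2) hinj hmin' (fun p hp => hp.1) hγ' hstuck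
  have hstep : maxArcStep dbStep m (dbArcs V L) γ =
      fun x y => x ∈ V ∧ x ≠ m ∧ x ++ [γ x] ∈ L ∧ y = x.tail ++ [γ x] := by
    ext x y
    simp only [maxArcStep, dbArcs, dbStep, Set.mem_ofPred_eq]
    tauto
  simp only [Finset.mem_coe] at key
  rw [← walkVtx_length, ← hstep, ← key]
  simp only [Set.subset_def, Prod.forall, dbArcs, Set.mem_ofPred_eq, mem_range_walkArc_iff,
    and_imp]
  exact and_congr_left' ⟨fun h u b hu => h u hu b, fun h u hu b => h u b hu⟩
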